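/- arXiv:1810.11660 — 3 statements merged into one kernel-verified Lean document; each statement's English description precedes it below -/
import Mathlib

section
/- Let n ≥ 5 and let L = F1(α_4,…,α_n,θ) be an n-dimensional complex filiform Leibniz algebra of the first family with α_4 = α_5 = … = α_{n−1} = 0. Then L is non-strongly nilpotent, i.e., L admits a pre-derivation that is not a nilpotent linear operator. -/
open Finset

/-- The basis vector `e_i` (1-indexed) of `ℂ^n`; zero if `i` is out of range. -/
noncomputable def E (n : ℕ) (i : ℕ) : Fin n → ℂ :=
  if h : 1 ≤ i ∧ i ≤ n then Pi.single (⟨i - 1, by omega⟩ : Fin n) 1 else 0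

/-- The bilinear bracket on `ℂ^n` determined by the products `m i j` of the
(1-indexed) basis vectors `e_i`, `e_j`. -/
noncomputable def bracketOf (n : ℕ) (m : ℕ → ℕ → Fin n → ℂ)
    (x y : Fin n → ℂ) : Fin n → ℂ :=
  ∑ i : Fin n, ∑ j : Fin n, (x i * y j) • m (i.1 + 1) (j.1 + 1)

/-- `P` is a pre-derivation of the algebra with bracket `br`. -/
def IsPreDeriv (n : ℕ) (br : (Fin n → ℂ) → (Fin n → ℂ) → Fin n → ℂ)
    (P : Module.End ℂ (Fin n → ℂ)) : Prop :=
  ∀ x y z, P (br (br x y) z) =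
    br (br (P x) y) z + br (br x (P y)) z + br (br x y) (P z)

/-- Multiplication table of the first family `F1(α₄,…,αₙ,θ)` of filiform Leibniz
algebras: `[e₁,e₁]=e₃`; `[eᵢ,e₁]=e_{i+1}` for `2 ≤ i ≤ n-1`;
`[e₁,e₂]=∑_{t=4}^{n-1} α_t e_t + θ eₙ`; `[eⱼ,e₂]=∑_{t=j+2}^{n} α_{t-j+2} e_t`
for `2 ≤ j ≤ n-2`; all other products zero. -/
noncomputable def F1mul (n : ℕ) (α : ℕ → ℂ) (θ : ℂ) (i j : ℕ) : Fin n → ℂ :=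
  if i = 1 ∧ j = 1 then E n 3
  else if 2 ≤ i ∧ i ≤ n - 1 ∧ j = 1 then E n (i + 1)
  else if i = 1 ∧ j = 2 then (∑ t ∈ Icc 4 (n - 1), α t • E n t) + θ • E n n
  else if 2 ≤ i ∧ i ≤ n - 2 ∧ j = 2 then ∑ t ∈ Icc (i + 2) n, α (t - i + 2) • E n t
  else 0

private lemma E_apply {n : ℕ} (t : ℕ) (k : Fin n) :
    E n t k = if 1 ≤ t ∧ t ≤ n ∧ k.1 = t - 1 then 1 else 0 := by
  unfold E
  by_cases h : 1 ≤ t ∧ t ≤ n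
  · rw [dif_pos h, Pi.single_apply]
    by_cases hk : k.1 = t - 1
    · rw [if_pos (Fin.ext hk), if_pos ⟨h.1, h.2, hk⟩]
    · rw [if_neg (fun he => hk (congrArg Fin.val he)), if_neg (by tauto)]
  · rw [dif_neg h, if_neg (by tauto)]; rfl

private lemma F1mul_zero {n : ℕ} (α : ℕ → ℂ) (θ : ℂ) (a b : ℕ)
    (h1 : b ≠ 1) (h2 : b ≠ 2) : F1mul n α θ a b = 0 := by
  unfold F1mul
  split_ifs with c1 c2 c3 c4
  · exact absurd c1.2 h1
  · exact absurd c2.2.2 h1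
  · exact absurd c3.2 h2
  · exact absurd c4.2.2 h2
  · rfl

private lemma sum_pair' {M : Type*} [AddCommMonoid M] {n : ℕ} (hn : 5 ≤ n) (f : Fin n → M)
    (hf : ∀ i : Fin n, 2 ≤ i.1 → f i = 0) :
    ∑ i : Fin n, f i = f ⟨0, by omega⟩ + f ⟨1, by omega⟩ := by
  rw [← Finset.sum_subset (Finset.subset_univ ({⟨0, by omega⟩, ⟨1, by omega⟩} : Finset (Fin n)))]
  · rw [Finset.sum_insert (by simp [Fin.ext_iff]), Finset.sum_singleton]
  · intro i _ hi
    apply hf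
    simp only [Finset.mem_insert, Finset.mem_singleton, Fin.ext_iff, Fin.val_mk] at hi
    omega

private lemma col1_apply {n : ℕ} (α : ℕ → ℂ) (θ : ℂ) (hn : 5 ≤ n) (a : ℕ) (k : Fin n) :
    F1mul n α θ (a + 1) 1 k =
      if a = 0 then (if k.1 = 2 then 1 else 0)
      else if a ≤ n - 2 then (if k.1 = a + 1 then 1 else 0)
      else 0 := by
  unfold F1mul
  by_cases h0 : a = 0
  · rw [if_pos (by omega : a + 1 = 1 ∧ 1 = 1), if_pos h0, E_apply]
    by_cases hk : k.1 = 2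
    · rw [if_pos ⟨by omega, by omega, by omega⟩, if_pos hk]
    · rw [if_neg (by omega), if_neg hk]
  · rw [if_neg (by omega)]
    by_cases h2 : a ≤ n - 2
    · rw [if_pos ⟨by omega, by omega, rfl⟩, if_neg h0, if_pos h2, E_apply]
      by_cases hk : k.1 = a + 1
      · rw [if_pos ⟨by omega, by omega, by omega⟩, if_pos hk]
      · rw [if_neg (by omega), if_neg hk]
    · rw [if_neg (by omega), if_neg (by omega), if_neg (by omega), if_neg h0, if_neg h2]
      rfl

private lemma col2_apply {n : ℕ} (α : ℕ → ℂ) (θ : ℂ) (hn : 5 ≤ n)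
    (hα : ∀ t, 4 ≤ t → t ≤ n - 1 → α t = 0) (a : ℕ) (k : Fin n) :
    F1mul n α θ (a + 1) 2 k =
      if k.1 = n - 1 then (if a = 0 then θ else if a = 1 then α n else 0) else 0 := by
  unfold F1mul
  rw [if_neg (by omega), if_neg (by omega)]
  by_cases h0 : a = 0
  · rw [if_pos (by omega : a + 1 = 1 ∧ 2 = 2)]
    have hsum : (∑ t ∈ Icc 4 (n - 1), α t • E n t) = 0 :=
      Finset.sum_eq_zero fun t ht => by
        rw [hα t (Finset.mem_Icc.mp ht).1 (Finset.mem_Icc.mp ht).2, zero_smul]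
    rw [hsum, zero_add, Pi.smul_apply, E_apply, smul_eq_mul]
    by_cases hk : k.1 = n - 1
    · rw [if_pos ⟨by omega, le_refl n, hk⟩, if_pos hk, if_pos h0, mul_one]
    · rw [if_neg (by omega), if_neg hk, mul_zero]
  · rw [if_neg (by omega)]
    by_cases h1 : a = 1
    · rw [if_pos ⟨by omega, by omega, rfl⟩, Finset.sum_apply,
        Finset.sum_eq_single_of_mem n (Finset.mem_Icc.mpr ⟨by omega, le_refl n⟩)]
      · rw [Pi.smul_apply, smul_eq_mul, E_apply, show n - (a + 1) + 2 = n by omega]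
        by_cases hk : k.1 = n - 1
        · rw [if_pos ⟨by omega, le_refl n, hk⟩, if_pos hk, if_neg h0, if_pos h1, mul_one]
        · rw [if_neg (by omega), if_neg hk, mul_zero]
      · intro t ht hne
        have ht' := Finset.mem_Icc.mp ht
        rw [show t - (a + 1) + 2 = t by omega, hα t (by omega) (by omega), zero_smul,
          Pi.zero_apply]
    · by_cases h2 : a + 1 ≤ n - 2
      · rw [if_pos ⟨by omega, h2, rfl⟩, Finset.sum_apply, Finset.sum_eq_zero, if_neg h0]
        · rw [if_neg h1, ite_self]
        · intro t ht
          have ht' := Finset.mem_Icc.mp ht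
          rw [hα (t - (a + 1) + 2) (by omega) (by omega), zero_smul, Pi.zero_apply]
      · rw [if_neg (by omega), if_neg h0, if_neg h1, ite_self, Pi.zero_apply]

private lemma br_apply {n : ℕ} (α : ℕ → ℂ) (θ : ℂ) (hn : 5 ≤ n)
    (hα : ∀ t, 4 ≤ t → t ≤ n - 1 → α t = 0) (x y : Fin n → ℂ) (k : Fin n) :
    bracketOf n (F1mul n α θ) x y k =
      (if 3 ≤ k.1 then x ⟨k.1 - 1, lt_of_le_of_lt (Nat.sub_le _ _) k.2⟩ * y ⟨0, by omega⟩
        else if k.1 = 2 then (x ⟨0, by omega⟩ + x ⟨1, by omega⟩) * y ⟨0, by omega⟩ else 0)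
      + (if k.1 = n - 1 then (θ * x ⟨0, by omega⟩ + α n * x ⟨1, by omega⟩) * y ⟨1, by omega⟩
        else 0) := by
  have hkn : k.1 < n := k.2
  unfold bracketOf
  rw [Finset.sum_apply]
  have hj : ∀ i : Fin n,
      (∑ j : Fin n, (x i * y j) • F1mul n α θ (i.1 + 1) (j.1 + 1)) k
        = x i * y ⟨0, by omega⟩ * F1mul n α θ (i.1 + 1) 1 k
          + x i * y ⟨1, by omega⟩ * F1mul n α θ (i.1 + 1) 2 k := by
    intro i
    rw [Finset.sum_apply]
    simp only [Pi.smul_apply, smul_eq_mul]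
    rw [sum_pair' hn _ (fun j hj2 => by
        rw [F1mul_zero α θ (i.1 + 1) (j.1 + 1) (by omega) (by omega), Pi.zero_apply, mul_zero])]
  rw [Finset.sum_congr rfl (fun i _ => hj i), Finset.sum_add_distrib]
  have hS2 : ∑ i : Fin n, x i * y ⟨1, by omega⟩ * F1mul n α θ (i.1 + 1) 2 k
      = (if k.1 = n - 1 then (θ * x ⟨0, by omega⟩ + α n * x ⟨1, by omega⟩) * y ⟨1, by omega⟩
        else 0) := by
    rw [sum_pair' hn _ (fun i hi => by
      rw [col2_apply α θ hn hα,
        show (if i.1 = 0 then θ else if i.1 = 1 then α n else 0) = 0 from by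
          rw [if_neg (by omega), if_neg (by omega)],
        ite_self, mul_zero])]
    rw [col2_apply α θ hn hα, col2_apply α θ hn hα]
    simp only [Fin.val_mk]
    norm_num
    by_cases hk : k.1 = n - 1
    · rw [if_pos hk, if_pos hk, if_pos hk]
      ring
    · rw [if_neg hk, if_neg hk, if_neg hk]
      norm_num
  have hS1 : ∑ i : Fin n, x i * y ⟨0, by omega⟩ * F1mul n α θ (i.1 + 1) 1 k
      = (if 3 ≤ k.1 then x ⟨k.1 - 1, lt_of_le_of_lt (Nat.sub_le _ _) k.2⟩ * y ⟨0, by omega⟩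
        else if k.1 = 2 then (x ⟨0, by omega⟩ + x ⟨1, by omega⟩) * y ⟨0, by omega⟩ else 0) := by
    by_cases hk3 : 3 ≤ k.1
    · rw [if_pos hk3]
      rw [Finset.sum_eq_single_of_mem (⟨k.1 - 1, lt_of_le_of_lt (Nat.sub_le _ _) k.2⟩ : Fin n)
        (Finset.mem_univ _)]
      · rw [col1_apply α θ hn]
        simp only [Fin.val_mk]
        rw [if_neg (by omega), if_pos (by omega), if_pos (by omega), mul_one]
      · intro i _ hne
        rw [col1_apply α θ hn]
        by_cases h0 : i.1 = 0
        · rw [if_pos h0, if_neg (by omega), mul_zero]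
        · rw [if_neg h0]
          by_cases h2 : i.1 ≤ n - 2
          · rw [if_pos h2, if_neg (by
              intro hc
              exact hne (Fin.ext (by simp only [Fin.val_mk]; omega))), mul_zero]
          · rw [if_neg h2, mul_zero]
    · rw [if_neg hk3]
      by_cases hk2 : k.1 = 2
      · rw [if_pos hk2]
        rw [sum_pair' hn _ (fun i hi => by
          rw [col1_apply α θ hn, if_neg (by omega)]
          by_cases h2 : i.1 ≤ n - 2
          · rw [if_pos h2, if_neg (by omega), mul_zero]
          · rw [if_neg h2, mul_zero])]
        rw [col1_apply α θ hn, col1_apply α θ hn]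
        simp only [Fin.val_mk, hk2]
        norm_num [show (1:ℕ) ≤ n - 2 from by omega]
        ring
      · rw [if_neg hk2, Finset.sum_eq_zero]
        intro i _
        rw [col1_apply α θ hn]
        by_cases h0 : i.1 = 0
        · rw [if_pos h0, if_neg (by omega), mul_zero]
        · rw [if_neg h0]
          by_cases h2 : i.1 ≤ n - 2
          · rw [if_pos h2, if_neg (by omega), mul_zero]
          · rw [if_neg h2, mul_zero]
  rw [hS1, hS2]

private lemma trip_apply {n : ℕ} (α : ℕ → ℂ) (θ : ℂ) (hn : 5 ≤ n)
    (hα : ∀ t, 4 ≤ t → t ≤ n - 1 → α t = 0) (x y z : Fin n → ℂ) (k : Fin n) :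
    bracketOf n (F1mul n α θ) (bracketOf n (F1mul n α θ) x y) z k =
      if 4 ≤ k.1 then
        x ⟨k.1 - 2, lt_of_le_of_lt (Nat.sub_le _ _) k.2⟩ * y ⟨0, by omega⟩ * z ⟨0, by omega⟩
      else if k.1 = 3 then
        (x ⟨0, by omega⟩ + x ⟨1, by omega⟩) * y ⟨0, by omega⟩ * z ⟨0, by omega⟩
      else 0 := by
  have hkn : k.1 < n := k.2
  have h0 : bracketOf n (F1mul n α θ) x y ⟨0, by omega⟩ = 0 := by
    rw [br_apply α θ hn hα]
    simp only [Fin.val_mk]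
    norm_num [show ¬((0:ℕ) = n - 1) from by omega]
  have h1 : bracketOf n (F1mul n α θ) x y ⟨1, by omega⟩ = 0 := by
    rw [br_apply α θ hn hα]
    simp only [Fin.val_mk]
    norm_num [show ¬((1:ℕ) = n - 1) from by omega]
  rw [br_apply α θ hn hα (bracketOf n (F1mul n α θ) x y) z k, h0, h1]
  by_cases hk3 : 3 ≤ k.1
  · rw [if_pos hk3, br_apply α θ hn hα x y]
    simp only [Fin.val_mk]
    rw [if_neg (show ¬(k.1 - 1 = n - 1) from by omega), add_zero]
    have e12 : k.1 - 1 - 1 = k.1 - 2 := by omega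
    simp only [e12, mul_zero, zero_add, zero_mul, ite_self, add_zero]
    by_cases h4 : 4 ≤ k.1
    · rw [if_pos (show 3 ≤ k.1 - 1 from by omega), if_pos h4]
    · rw [if_neg (show ¬3 ≤ k.1 - 1 from by omega), if_pos (show k.1 - 1 = 2 from by omega),
        if_neg h4, if_pos (show k.1 = 3 from by omega)]
  · rw [if_neg hk3]
    norm_num [show ¬(4 ≤ k.1) from by omega, show ¬(k.1 = 3) from by omega,
      show ¬(k.1 = n - 1) from by omega]

private noncomputable def Pdiag (n : ℕ) : Module.End ℂ (Fin n → ℂ) where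
  toFun x := fun k => if 2 ≤ k.1 ∧ Even k.1 then x k else 0
  map_add' x y := by
    funext k
    by_cases h : 2 ≤ k.1 ∧ Even k.1 <;> simp [h]
  map_smul' c x := by
    funext k
    by_cases h : 2 ≤ k.1 ∧ Even k.1 <;> simp [h]

private lemma Pdiag_apply {n : ℕ} (x : Fin n → ℂ) (k : Fin n) :
    Pdiag n x k = if 2 ≤ k.1 ∧ Even k.1 then x k else 0 := rfl

/-- Proposition 4.1: if `α₄ = ⋯ = α_{n-1} = 0`, then the first-family filiform
Leibniz algebra `F1(α₄,…,αₙ,θ)` admits a non-nilpotent pre-derivation, i.e. it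
is non-strongly nilpotent. -/
theorem stmt_2 (n : ℕ) (hn : 5 ≤ n) (α : ℕ → ℂ) (θ : ℂ)
    (hleib : ∀ x y z : Fin n → ℂ,
      bracketOf n (F1mul n α θ) (bracketOf n (F1mul n α θ) x y) z =
        bracketOf n (F1mul n α θ) (bracketOf n (F1mul n α θ) x z) y +
        bracketOf n (F1mul n α θ) x (bracketOf n (F1mul n α θ) y z))
    (hα : ∀ t, 4 ≤ t → t ≤ n - 1 → α t = 0) :
    ∃ P : Module.End ℂ (Fin n → ℂ),
      IsPreDeriv n (bracketOf n (F1mul n α θ)) P ∧ ¬ IsNilpotent P := by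
  refine ⟨Pdiag n, ?_, ?_⟩
  · intro x y z
    funext k
    have hkn : k.1 < n := k.2
    have hy0 : Pdiag n y ⟨0, by omega⟩ = 0 := by
      rw [Pdiag_apply]
      norm_num
    have hz0 : Pdiag n z ⟨0, by omega⟩ = 0 := by
      rw [Pdiag_apply]
      norm_num
    have hx0 : Pdiag n x ⟨0, by omega⟩ = 0 := by
      rw [Pdiag_apply]
      norm_num
    have hx1 : Pdiag n x ⟨1, by omega⟩ = 0 := by
      rw [Pdiag_apply]
      norm_num
    rw [Pi.add_apply, Pi.add_apply, Pdiag_apply,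
      trip_apply α θ hn hα x y z k, trip_apply α θ hn hα (Pdiag n x) y z k,
      trip_apply α θ hn hα x (Pdiag n y) z k, trip_apply α θ hn hα x y (Pdiag n z) k,
      hy0, hz0, hx0, hx1]
    simp only [mul_zero, zero_mul, add_zero, zero_add, ite_self]
    by_cases h4 : 4 ≤ k.1
    · rw [if_pos h4, Pdiag_apply]
      simp only [Fin.val_mk]
      have hpar : (2 ≤ k.1 - 2 ∧ Even (k.1 - 2)) ↔ (2 ≤ k.1 ∧ Even k.1) := by
        constructor
        · rintro ⟨h1, h2⟩
          refine ⟨by omega, ?_⟩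
          rw [Nat.even_sub (by omega : 2 ≤ k.1)] at h2
          simpa using h2
        · rintro ⟨h1, h2⟩
          refine ⟨by omega, ?_⟩
          rw [Nat.even_sub (by omega : 2 ≤ k.1)]
          simpa using h2
      by_cases hc : 2 ≤ k.1 ∧ Even k.1
      · rw [if_pos hc, if_pos h4, if_pos (hpar.mpr hc)]
      · rw [if_neg hc, if_neg (fun hh => hc (hpar.mp hh)), zero_mul, zero_mul, ite_self]
    · rw [if_neg h4, if_neg h4]
      by_cases hc : 2 ≤ k.1 ∧ Even k.1
      · rw [if_pos hc, if_neg (show ¬(k.1 = 3) from fun h3 => by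
          rw [h3] at hc
          exact (by decide : ¬ Even 3) hc.2)]
      · rw [if_neg hc]
  · rintro ⟨m, hm⟩
    have key : ∀ (m : ℕ) (x : Fin n → ℂ),
        ((Pdiag n) ^ m) x ⟨2, by omega⟩ = x ⟨2, by omega⟩ := by
      intro m
      induction m with
      | zero => intro x; rfl
      | succ m ih =>
        intro x
        rw [pow_succ, Module.End.mul_apply, ih, Pdiag_apply,
          if_pos ⟨le_refl 2, by simpa using (even_two : Even 2)⟩]
    have h1 := key m (fun _ => 1)
    rw [hm] at h1
    simp at h1
end

section
/- Let n ≥ 5 and let L = F2(β_4,…,β_n,γ) be an n-dimensional complex filiform Leibniz algebra of the second family with β_4 = β_5 = … = β_{n−1} = 0. Then L is non-strongly nilpotent, i.e., L admits a pre-derivation that is not a nilpotent linear operator. -/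
open Finset

noncomputable def F2mul (n : ℕ) (β : ℕ → ℂ) (γ : ℂ) (i j : ℕ) : Fin n → ℂ :=
  if i = 1 ∧ j = 1 then E n 3
  else if 3 ≤ i ∧ i ≤ n - 1 ∧ j = 1 then E n (i + 1)
  else if i = 1 ∧ j = 2 then ∑ t ∈ Icc 4 n, β t • E n t
  else if i = 2 ∧ j = 2 then γ • E n n
  else if 3 ≤ i ∧ i ≤ n - 2 ∧ j = 2 then ∑ t ∈ Icc (i + 2) n, β (t - i + 2) • E n t
  else 0

lemma E_apply_ne (n t : ℕ) (k : Fin n) (hk : k.1 + 1 ≠ t) : E n t k = 0 := by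
  unfold E
  split
  · rename_i h
    refine Pi.single_eq_of_ne (fun he => hk ?_) 1
    have := congrArg Fin.val he
    simp only at this
    omega
  · rfl

lemma br_apply_s5 (n : ℕ) (m : ℕ → ℕ → Fin n → ℂ) (x y : Fin n → ℂ) (k : Fin n) :
    bracketOf n m x y k = ∑ i : Fin n, ∑ j : Fin n, (x i * y j) * m (i.1 + 1) (j.1 + 1) k := by
  unfold bracketOf
  simp [Finset.sum_apply]

-- all products lie in span e3..en
lemma F2mul_low (n : ℕ) (hn : 5 ≤ n) (β : ℕ → ℂ) (γ : ℂ) (i j : ℕ) (k : Fin n)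
    (hk : k.1 ≤ 1) : F2mul n β γ i j k = 0 := by
  unfold F2mul
  split_ifs with h1 h2 h3 h4 h5
  · exact E_apply_ne n 3 k (by omega)
  · exact E_apply_ne n (i + 1) k (by omega)
  · rw [Finset.sum_apply]
    refine Finset.sum_eq_zero fun t ht => ?_
    rw [Finset.mem_Icc] at ht
    rw [Pi.smul_apply, E_apply_ne n t k (by omega), smul_zero]
  · rw [Pi.smul_apply, E_apply_ne n n k (by omega), smul_zero]
  · rw [Finset.sum_apply]
    refine Finset.sum_eq_zero fun t ht => ?_
    rw [Finset.mem_Icc] at ht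
    rw [Pi.smul_apply, E_apply_ne n t k (by omega), smul_zero]
  · rfl

-- row n is zero
lemma F2mul_rown (n : ℕ) (hn : 5 ≤ n) (β : ℕ → ℂ) (γ : ℂ) (j : ℕ) :
    F2mul n β γ n j = 0 := by
  unfold F2mul
  split_ifs with h1 h2 h3 h4 h5
  · exact absurd h1 (by omega)
  · exact absurd h2 (by omega)
  · exact absurd h3 (by omega)
  · exact absurd h4 (by omega)
  · exact absurd h5 (by omega)
  · rfl

-- row 2 supported only at top coordinate
lemma F2mul_row2 (n : ℕ) (hn : 5 ≤ n) (β : ℕ → ℂ) (γ : ℂ) (j : ℕ) (k : Fin n)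
    (hk : k.1 + 1 < n) : F2mul n β γ 2 j k = 0 := by
  unfold F2mul
  split_ifs with h1 h2 h3 h4 h5
  · exact absurd h1 (by omega)
  · exact absurd h2 (by omega)
  · exact absurd h3 (by omega)
  · rw [Pi.smul_apply, E_apply_ne n n k (by omega), smul_zero]
  · exact absurd h5 (by omega)
  · rfl

-- column 2 supported only at top coordinate, given hβ
lemma F2mul_col2 (n : ℕ) (hn : 5 ≤ n) (β : ℕ → ℂ) (γ : ℂ)
    (hβ : ∀ t, 4 ≤ t → t ≤ n - 1 → β t = 0) (i : ℕ) (k : Fin n)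
    (hk : k.1 + 1 < n) : F2mul n β γ i 2 k = 0 := by
  unfold F2mul
  split_ifs with h1 h2 h3 h4 h5
  · exact absurd h1 (by omega)
  · exact absurd h2 (by omega)
  · rw [Finset.sum_apply]
    refine Finset.sum_eq_zero fun t ht => ?_
    rw [Finset.mem_Icc] at ht
    rcases eq_or_ne t n with rfl | hne
    · rw [Pi.smul_apply, E_apply_ne _ _ _ (by omega), smul_zero]
    · simp [hβ t (by omega) (by omega)]
  · rw [Pi.smul_apply, E_apply_ne n n k (by omega), smul_zero]
  · rw [Finset.sum_apply]
    refine Finset.sum_eq_zero fun t ht => ?_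
    rw [Finset.mem_Icc] at ht
    rcases eq_or_ne t n with rfl | hne
    · rw [Pi.smul_apply, E_apply_ne _ _ _ (by omega), smul_zero]
    · simp [hβ (t - i + 2) (by omega) (by omega)]
  · rfl

-- column 2 vanishes entirely for rows ≥ 3, given hβ
lemma F2mul_col2_big (n : ℕ) (hn : 5 ≤ n) (β : ℕ → ℂ) (γ : ℂ)
    (hβ : ∀ t, 4 ≤ t → t ≤ n - 1 → β t = 0) (i : ℕ) (hi : 3 ≤ i) :
    F2mul n β γ i 2 = 0 := by
  unfold F2mul
  split_ifs with h1 h2 h3 h4 h5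
  · exact absurd h1 (by omega)
  · exact absurd h2 (by omega)
  · exact absurd h3 (by omega)
  · exact absurd h4 (by omega)
  · refine Finset.sum_eq_zero fun t ht => ?_
    rw [Finset.mem_Icc] at ht
    rw [hβ (t - i + 2) (by omega) (by omega), zero_smul]
  · rfl

-- if u is supported only at top coordinate, its bracket with anything is 0
lemma br_top (n : ℕ) (hn : 5 ≤ n) (β : ℕ → ℂ) (γ : ℂ) (u z : Fin n → ℂ)
    (hu : ∀ k : Fin n, k.1 + 1 < n → u k = 0) :
    bracketOf n (F2mul n β γ) u z = 0 := by
  funext k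
  rw [br_apply_s5]
  refine Finset.sum_eq_zero fun i _ => Finset.sum_eq_zero fun j _ => ?_
  by_cases hi : i.1 + 1 < n
  · rw [hu i hi, zero_mul, zero_mul]
  · have h : i.1 + 1 = n := by omega
    rw [h, F2mul_rown n hn β γ (j.1 + 1), Pi.zero_apply, mul_zero]

lemma br_e2_left_low (n : ℕ) (hn : 5 ≤ n) (β : ℕ → ℂ) (γ : ℂ) (c : ℂ)
    (y : Fin n → ℂ) (k : Fin n) (hk : k.1 + 1 < n) :
    bracketOf n (F2mul n β γ) (c • E n 2) y k = 0 := by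
  rw [br_apply_s5]
  refine Finset.sum_eq_zero fun i _ => Finset.sum_eq_zero fun j _ => ?_
  by_cases hi : i.1 = 1
  · rw [show i.1 + 1 = 2 by omega, F2mul_row2 n hn β γ (j.1 + 1) k hk, mul_zero]
  · rw [Pi.smul_apply, E_apply_ne n 2 i (by omega), smul_zero, zero_mul, zero_mul]

lemma br_e2_right_low (n : ℕ) (hn : 5 ≤ n) (β : ℕ → ℂ) (γ : ℂ)
    (hβ : ∀ t, 4 ≤ t → t ≤ n - 1 → β t = 0) (c : ℂ)
    (x : Fin n → ℂ) (k : Fin n) (hk : k.1 + 1 < n) :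
    bracketOf n (F2mul n β γ) x (c • E n 2) k = 0 := by
  rw [br_apply_s5]
  refine Finset.sum_eq_zero fun i _ => Finset.sum_eq_zero fun j _ => ?_
  by_cases hj : j.1 = 1
  · rw [show j.1 + 1 = 2 by omega, F2mul_col2 n hn β γ hβ (i.1 + 1) k hk, mul_zero]
  · rw [Pi.smul_apply, E_apply_ne n 2 j (by omega), smul_zero, mul_zero, zero_mul]

lemma br_low (n : ℕ) (hn : 5 ≤ n) (β : ℕ → ℂ) (γ : ℂ) (x y : Fin n → ℂ)
    (k : Fin n) (hk : k.1 ≤ 1) : bracketOf n (F2mul n β γ) x y k = 0 := by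
  rw [br_apply_s5]
  refine Finset.sum_eq_zero fun i _ => Finset.sum_eq_zero fun j _ => ?_
  rw [F2mul_low n hn β γ _ _ k hk, mul_zero]

lemma br_e2_right_zero (n : ℕ) (hn : 5 ≤ n) (β : ℕ → ℂ) (γ : ℂ)
    (hβ : ∀ t, 4 ≤ t → t ≤ n - 1 → β t = 0) (c : ℂ)
    (w : Fin n → ℂ) (hw : ∀ k : Fin n, k.1 ≤ 1 → w k = 0) :
    bracketOf n (F2mul n β γ) w (c • E n 2) = 0 := by
  funext k
  rw [br_apply_s5]
  refine Finset.sum_eq_zero fun i _ => Finset.sum_eq_zero fun j _ => ?_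
  by_cases hj : j.1 = 1
  · by_cases hi : i.1 ≤ 1
    · rw [hw i hi, zero_mul, zero_mul]
    · rw [show j.1 + 1 = 2 by omega,
        F2mul_col2_big n hn β γ hβ (i.1 + 1) (by omega), Pi.zero_apply, mul_zero]
  · rw [Pi.smul_apply, E_apply_ne n 2 j (by omega), smul_zero, mul_zero, zero_mul]

/-- If `β₄ = ⋯ = β_{n-1} = 0`, then the second-family filiform Leibniz algebra
`F2(β₄,…,βₙ,γ)` admits a non-nilpotent pre-derivation, i.e. it is non-strongly
nilpotent. -/
theorem stmt_5 (n : ℕ) (hn : 5 ≤ n) (β : ℕ → ℂ) (γ : ℂ)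
    (hleib : ∀ x y z : Fin n → ℂ,
      bracketOf n (F2mul n β γ) (bracketOf n (F2mul n β γ) x y) z =
        bracketOf n (F2mul n β γ) (bracketOf n (F2mul n β γ) x z) y +
        bracketOf n (F2mul n β γ) x (bracketOf n (F2mul n β γ) y z))
    (hβ : ∀ t, 4 ≤ t → t ≤ n - 1 → β t = 0) :
    ∃ P : Module.End ℂ (Fin n → ℂ),
      IsPreDeriv n (bracketOf n (F2mul n β γ)) P ∧ ¬ IsNilpotent P := by
  have hn1 : 1 < n := by omega
  set i1 : Fin n := ⟨1, hn1⟩ with hi1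
  have hE2 : E n 2 i1 = 1 := by
    unfold E
    rw [dif_pos ⟨by omega, by omega⟩]
    exact Pi.single_eq_same _ _
  refine ⟨{ toFun := fun x => x i1 • E n 2,
            map_add' := fun a b => by simp [add_smul],
            map_smul' := fun c a => by simp [smul_smul] }, ?_, ?_⟩
  · intro x y z
    simp only [LinearMap.coe_mk, AddHom.coe_mk]
    rw [br_low n hn β γ _ z i1 (by norm_num), zero_smul,
      br_top n hn β γ _ z (fun k hk => br_e2_left_low n hn β γ (x i1) y k hk),
      br_top n hn β γ _ z (fun k hk => br_e2_right_low n hn β γ hβ (y i1) x k hk),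
      br_e2_right_zero n hn β γ hβ (z i1) _ (fun k hk => br_low n hn β γ x y k hk)]
    simp
  · rintro ⟨m, hm⟩
    have hP : ∀ m : ℕ,
        (({ toFun := fun x => x i1 • E n 2,
            map_add' := fun a b => by simp [add_smul],
            map_smul' := fun c a => by simp [smul_smul] } :
          Module.End ℂ (Fin n → ℂ)) ^ m) (E n 2) = E n 2 := by
      intro m
      induction m with
      | zero => simp
      | succ m ih =>
        rw [pow_succ, Module.End.mul_apply]
        simp only [LinearMap.coe_mk, AddHom.coe_mk, hE2, one_smul] at ih ⊢
        rw [ih]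
    have := hP m
    rw [hm] at this
    have h0 := congrFun this i1
    rw [hE2] at h0
    simp at h0
end

section
/- Fix n ≥ 5, α ∈ {0,1} (with α = 0 when n is odd), and structure constants defining the products [e_i,e_j] for 2 ≤ i < j ≤ n−1 of a third-family filiform Leibniz algebra. Then for any complex parameters θ_1, θ_2, θ_3, the set of pre-derivations of L(θ_1,θ_2,θ_3) coincides with the set of pre-derivations of L(0,0,0): a linear map P of the common underlying n-dimensional complex vector space is a pre-derivation of L(θ_1,θ_2,θ_3) if and only if it is a pre-derivation of L(0,0,0). -/
open Finset

/-- Multiplication table of the third family `L(θ₁,θ₂,θ₃)` of filiform Leibniz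
algebras, with prescribed skew-symmetric products `μ i j = [eᵢ,eⱼ]`
for `2 ≤ i < j ≤ n-1`:
`[eᵢ,e₁]=e_{i+1}` for `2 ≤ i ≤ n-1`; `[e₁,eᵢ]=-e_{i+1}` for `3 ≤ i ≤ n-1`;
`[e₁,e₁]=θ₁ eₙ`; `[e₁,e₂]=-e₃+θ₂ eₙ`; `[e₂,e₂]=θ₃ eₙ`;
`[eᵢ,eⱼ]=-[eⱼ,eᵢ]=μ i j` for `2 ≤ i < j ≤ n-1`; all other products zero. -/
noncomputable def F3mul (n : ℕ) (θ₁ θ₂ θ₃ : ℂ) (μ : ℕ → ℕ → Fin n → ℂ)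
    (i j : ℕ) : Fin n → ℂ :=
  if i = 1 ∧ j = 1 then θ₁ • E n n
  else if i = 1 ∧ j = 2 then -E n 3 + θ₂ • E n n
  else if i = 2 ∧ j = 2 then θ₃ • E n n
  else if 2 ≤ i ∧ i ≤ n - 1 ∧ j = 1 then E n (i + 1)
  else if i = 1 ∧ 3 ≤ j ∧ j ≤ n - 1 then -E n (j + 1)
  else if 2 ≤ i ∧ i < j ∧ j ≤ n - 1 then μ i j
  else if 2 ≤ j ∧ j < i ∧ i ≤ n - 1 then -μ j i
  else 0

/-- coefficient of the θ-perturbation -/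
noncomputable def dco (θ₁ θ₂ θ₃ : ℂ) (i j : ℕ) : ℂ :=
  if i = 1 ∧ j = 1 then θ₁
  else if i = 1 ∧ j = 2 then θ₂
  else if i = 2 ∧ j = 2 then θ₃
  else 0

lemma E_apply_lo (n m : ℕ) (hm : 3 ≤ m) (f : Fin n) (hf : f.1 ≤ 1) : E n m f = 0 := by
  unfold E
  split
  · rw [Pi.single_apply, if_neg]
    intro he
    have := congrArg Fin.val he
    simp only at this
    omega
  · rfl

lemma F3mul_apply_lo (n : ℕ) (hn : 5 ≤ n) (θ₁ θ₂ θ₃ : ℂ) (μ : ℕ → ℕ → Fin n → ℂ)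
    (hspan : ∀ i j, 2 ≤ i → i < j → j ≤ n - 1 →
      μ i j ∈ Submodule.span ℂ (E n '' Set.Icc (i + j + 1) n))
    (a b : ℕ) (f : Fin n) (hf : f.1 ≤ 1) :
    F3mul n θ₁ θ₂ θ₃ μ a b f = 0 := by
  have hEn : E n n f = 0 := E_apply_lo n n (by omega) f hf
  have hE3 : E n 3 f = 0 := E_apply_lo n 3 le_rfl f hf
  have hmu : ∀ i j, 2 ≤ i → i < j → j ≤ n - 1 → μ i j f = 0 := by
    intro i j h1 h2 h3
    have hsp := hspan i j h1 h2 h3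
    have hle : Submodule.span ℂ (E n '' Set.Icc (i + j + 1) n) ≤
        LinearMap.ker (LinearMap.proj (R := ℂ) (φ := fun _ : Fin n => ℂ) f) := by
      rw [Submodule.span_le]
      rintro v ⟨m, hm, rfl⟩
      simp only [SetLike.mem_coe, LinearMap.mem_ker, LinearMap.proj_apply]
      exact E_apply_lo n m (by have := hm.1; omega) f hf
    exact hle hsp
  unfold F3mul
  split_ifs with h1 h2 h3 h4 h5 h6 h7
  · simp [hEn]
  · simp [hEn, hE3]
  · simp [hEn]
  · exact E_apply_lo n (a + 1) (by omega) f hf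
  · simp [E_apply_lo n (b + 1) (by omega) f hf]
  · exact hmu a b h6.1 h6.2.1 h6.2.2
  · simp [hmu b a h7.1 h7.2.1 h7.2.2]
  · rfl

lemma F3mul_n_left (n : ℕ) (hn : 5 ≤ n) (θ₁ θ₂ θ₃ : ℂ) (μ : ℕ → ℕ → Fin n → ℂ) (b : ℕ) :
    F3mul n θ₁ θ₂ θ₃ μ n b = 0 := by
  unfold F3mul
  split_ifs <;> first | rfl | omega

lemma F3mul_decomp (n : ℕ) (θ₁ θ₂ θ₃ : ℂ) (μ : ℕ → ℕ → Fin n → ℂ) (i j : ℕ) :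
    F3mul n θ₁ θ₂ θ₃ μ i j = F3mul n 0 0 0 μ i j + dco θ₁ θ₂ θ₃ i j • E n n := by
  unfold F3mul dco
  split_ifs <;> module

lemma bracketOf_add_left (n : ℕ) (m : ℕ → ℕ → Fin n → ℂ) (x x' y : Fin n → ℂ) :
    bracketOf n m (x + x') y = bracketOf n m x y + bracketOf n m x' y := by
  unfold bracketOf
  rw [← Finset.sum_add_distrib]
  refine Finset.sum_congr rfl fun i _ => ?_
  rw [← Finset.sum_add_distrib]
  refine Finset.sum_congr rfl fun j _ => ?_
  rw [Pi.add_apply, add_mul, add_smul]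

lemma bracketOf_smul_left (n : ℕ) (m : ℕ → ℕ → Fin n → ℂ) (c : ℂ) (x y : Fin n → ℂ) :
    bracketOf n m (c • x) y = c • bracketOf n m x y := by
  unfold bracketOf
  rw [Finset.smul_sum]
  refine Finset.sum_congr rfl fun i _ => ?_
  rw [Finset.smul_sum]
  refine Finset.sum_congr rfl fun j _ => ?_
  rw [Pi.smul_apply, smul_eq_mul, mul_assoc, ← smul_smul]

lemma bracket_decomp (n : ℕ) (θ₁ θ₂ θ₃ : ℂ) (μ : ℕ → ℕ → Fin n → ℂ) (x y : Fin n → ℂ) :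
    bracketOf n (F3mul n θ₁ θ₂ θ₃ μ) x y =
      bracketOf n (F3mul n 0 0 0 μ) x y +
        (∑ i : Fin n, ∑ j : Fin n, x i * y j * dco θ₁ θ₂ θ₃ (i.1 + 1) (j.1 + 1)) • E n n := by
  unfold bracketOf
  simp only [F3mul_decomp n θ₁ θ₂ θ₃ μ, smul_add, Finset.sum_add_distrib, smul_smul]
  congr 1
  rw [Finset.sum_smul]
  refine Finset.sum_congr rfl fun i _ => ?_
  rw [Finset.sum_smul]

lemma bracket_Enn (n : ℕ) (hn : 5 ≤ n) (θ₁ θ₂ θ₃ : ℂ) (μ : ℕ → ℕ → Fin n → ℂ)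
    (z : Fin n → ℂ) :
    bracketOf n (F3mul n θ₁ θ₂ θ₃ μ) (E n n) z = 0 := by
  unfold bracketOf
  apply Finset.sum_eq_zero; intro i _
  apply Finset.sum_eq_zero; intro j _
  by_cases hi : i.1 = n - 1
  · have h : i.1 + 1 = n := by omega
    rw [h, F3mul_n_left n hn, smul_zero]
  · have h : E n n i = 0 := by
      unfold E
      rw [dif_pos ⟨by omega, le_rfl⟩, Pi.single_apply, if_neg]
      intro he
      exact hi (congrArg Fin.val he)
    rw [h, zero_mul, zero_smul]

lemma bracket_apply_lo (n : ℕ) (hn : 5 ≤ n) (θ₁ θ₂ θ₃ : ℂ) (μ : ℕ → ℕ → Fin n → ℂ)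
    (hspan : ∀ i j, 2 ≤ i → i < j → j ≤ n - 1 →
      μ i j ∈ Submodule.span ℂ (E n '' Set.Icc (i + j + 1) n))
    (x y : Fin n → ℂ) (f : Fin n) (hf : f.1 ≤ 1) :
    bracketOf n (F3mul n θ₁ θ₂ θ₃ μ) x y f = 0 := by
  unfold bracketOf
  rw [Finset.sum_apply]
  apply Finset.sum_eq_zero; intro i _
  rw [Finset.sum_apply]
  apply Finset.sum_eq_zero; intro j _
  rw [Pi.smul_apply, F3mul_apply_lo n hn θ₁ θ₂ θ₃ μ hspan _ _ f hf, smul_zero]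

lemma dco_hi (θ₁ θ₂ θ₃ : ℂ) (i j : ℕ) (hi : 3 ≤ i) : dco θ₁ θ₂ θ₃ i j = 0 := by
  unfold dco
  split_ifs <;> first | rfl | omega

/-- The spaces of pre-derivations of the third-family filiform Leibniz algebras
`L(θ₁,θ₂,θ₃)` and `L(0,0,0)` coincide. -/
theorem stmt_9 (n : ℕ) (hn : 5 ≤ n) (α : ℂ) (hα : α = 0 ∨ α = 1)
    (hαodd : Odd n → α = 0) (μ : ℕ → ℕ → Fin n → ℂ)
    (hspan : ∀ i j, 2 ≤ i → i < j → j ≤ n - 1 →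
      μ i j ∈ Submodule.span ℂ (E n '' Set.Icc (i + j + 1) n))
    (hmid : ∀ i, 2 ≤ i → 2 * i < n + 1 →
      μ i (n + 1 - i) = ((-1 : ℂ) ^ (i + 1) * α) • E n n)
    (θ₁ θ₂ θ₃ : ℂ) (P : Module.End ℂ (Fin n → ℂ)) :
    IsPreDeriv n (bracketOf n (F3mul n θ₁ θ₂ θ₃ μ)) P ↔
      IsPreDeriv n (bracketOf n (F3mul n 0 0 0 μ)) P := by
  have T : ∀ x y z : Fin n → ℂ,
      bracketOf n (F3mul n θ₁ θ₂ θ₃ μ) (bracketOf n (F3mul n θ₁ θ₂ θ₃ μ) x y) z =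
        bracketOf n (F3mul n 0 0 0 μ) (bracketOf n (F3mul n 0 0 0 μ) x y) z := by
    intro x y z
    rw [bracket_decomp n θ₁ θ₂ θ₃ μ x y, bracketOf_add_left, bracketOf_smul_left,
      bracket_Enn n hn, smul_zero, add_zero,
      bracket_decomp n θ₁ θ₂ θ₃ μ (bracketOf n (F3mul n 0 0 0 μ) x y) z]
    have hc : (∑ i : Fin n, ∑ j : Fin n,
        bracketOf n (F3mul n 0 0 0 μ) x y i * z j * dco θ₁ θ₂ θ₃ (i.1 + 1) (j.1 + 1)) = 0 := by
      apply Finset.sum_eq_zero; intro i _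
      apply Finset.sum_eq_zero; intro j _
      by_cases hi : i.1 ≤ 1
      · rw [bracket_apply_lo n hn 0 0 0 μ hspan x y i hi, zero_mul, zero_mul]
      · rw [dco_hi θ₁ θ₂ θ₃ _ _ (by omega), mul_zero]
    rw [hc, zero_smul, add_zero]
  unfold IsPreDeriv
  constructor <;> intro h x y z
  · have := h x y z
    simpa only [T] using this
  · simp only [T]
    exact h x y z
end
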